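/- arXiv:1501.00047 — 2 statements merged into one kernel-verified Lean document; each statement's English description precedes it below -/
import Mathlib

section
/- For all χ ≥ 0 and α ∈ [0,1], α + χ(1 − α) + 2χ·sqrt(α(1 − α)) ≤ (χ + 1)/2 + (1/2)·sqrt(5χ² − 2χ + 1). -/
theorem phi_le_bound (χ α : ℝ) (hχ : 0 ≤ χ) (hα : α ∈ Set.Icc (0 : ℝ) 1) :
    α + χ * (1 - α) + 2 * χ * Real.sqrt (α * (1 - α)) ≤
      (χ + 1) / 2 + Real.sqrt (5 * χ ^ 2 - 2 * χ + 1) / 2 := by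
  obtain ⟨h0, h1⟩ := hα
  set s := Real.sqrt (α * (1 - α)) with hs_def
  set S := Real.sqrt (5 * χ ^ 2 - 2 * χ + 1) with hS_def
  have hs : 0 ≤ s := Real.sqrt_nonneg _
  have hS : 0 ≤ S := Real.sqrt_nonneg _
  have hs2 : s ^ 2 = α * (1 - α) := by
    rw [hs_def, Real.sq_sqrt (by nlinarith)]
  have hS2 : S ^ 2 = 5 * χ ^ 2 - 2 * χ + 1 := by
    rw [hS_def, Real.sq_sqrt (by nlinarith [sq_nonneg (χ - 1), sq_nonneg χ])]
  nlinarith [sq_nonneg ((1 - χ) * s - 2 * χ * (α - 1/2)), mul_nonneg hS hs,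
    sq_nonneg (S - 2 * ((1 - χ) * (α - 1/2) + 2 * χ * s)), sq_nonneg (α - 1/2)]
end

section
/- Let f: ℝ^n → ℝ be defined by f(x) = c·Σ_{i=1}^l (sqrt(μ² + (wᵢᵀx)²) − μ) + (1/2)‖Ax − b‖₂², where c > 0, μ > 0, wᵢ ∈ ℝ^n are the columns of W ∈ ℝ^{n×l}, A ∈ ℝ^{m×n}, b ∈ ℝ^m, and Ker(Wᵀ) ∩ Ker(A) = {0}. Then f is strictly convex and has a unique global minimizer. -/
/-!
Write `f x = φ (Wᵀ x) + ψ (A x)` with `φ u = c Σᵢ (√(μ² + uᵢ²) − μ)` and `ψ v = ½ ‖v − b‖²`.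
Both `φ` and `ψ` are sums of strictly convex, coercive, nonnegative functions of single
coordinates, hence strictly convex and coercive themselves. For `x ≠ y` the kernel condition says
that `Wᵀ` or `A` separates `x` from `y`, so the strictness of `φ` or of `ψ` passes to `f`; and
`x ↦ (Wᵀ x, A x)` is a closed embedding, so `f` is coercive. A convex function on a
finite-dimensional space is continuous, so `f` attains its minimum, and strict convexity makes the
minimizer unique.
-/

open scoped Matrix

open Filter Set

theorem StrictConvexOn.const_mul {E : Type*} [AddCommMonoid E] [Module ℝ E] {s : Set E}
    {f : E → ℝ} (hf : StrictConvexOn ℝ s f) {c : ℝ} (hc : 0 < c) :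
    StrictConvexOn ℝ s fun x => c * f x := by
  refine ⟨hf.1, fun x hx y hy hxy a b ha hb hab => ?_⟩
  have := mul_lt_mul_of_pos_left (hf.2 hx hy hxy ha hb hab) hc
  simp only [smul_eq_mul] at this ⊢
  linarith

theorem tendsto_cocompact_atTop_of_abs_sub_le {h : ℝ → ℝ} (C : ℝ) (hC : ∀ t, |t| - C ≤ h t) :
    Tendsto h (cocompact ℝ) atTop :=
  tendsto_atTop_mono hC (tendsto_atTop_add_const_right _ (-C) tendsto_norm_cocompact_atTop)

theorem strictConvexOn_univ_sub_mul_self (b : ℝ) :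
    StrictConvexOn ℝ univ fun t : ℝ => (t - b) * (t - b) := by
  refine ⟨convex_univ, fun x _ y _ hxy a a' ha ha' hab => ?_⟩
  have hgap : 0 < a * a' * ((x - y) * (x - y)) :=
    mul_pos (mul_pos ha ha') (mul_self_pos.2 (sub_ne_zero.2 hxy))
  obtain rfl : a' = 1 - a := by linarith
  simp only [smul_eq_mul]
  nlinarith

theorem tendsto_sub_mul_self_cocompact (b : ℝ) :
    Tendsto (fun t : ℝ => (t - b) * (t - b)) (cocompact ℝ) atTop :=
  tendsto_cocompact_atTop_of_abs_sub_le (|b| + 1) fun t => by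
    nlinarith [abs_sub_abs_le_abs_sub t b, abs_mul_abs_self (t - b), abs_nonneg (t - b)]

noncomputable def pseudoHuber (μ t : ℝ) : ℝ := √(μ ^ 2 + t ^ 2) - μ

theorem pseudoHuber_nonneg (μ t : ℝ) : 0 ≤ pseudoHuber μ t := by
  have := Real.abs_le_sqrt (show μ ^ 2 ≤ μ ^ 2 + t ^ 2 by nlinarith)
  unfold pseudoHuber
  linarith [le_abs_self μ]

theorem tendsto_pseudoHuber_cocompact (μ : ℝ) :
    Tendsto (pseudoHuber μ) (cocompact ℝ) atTop :=
  tendsto_cocompact_atTop_of_abs_sub_le μ fun t => by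
    have := Real.abs_le_sqrt (show t ^ 2 ≤ μ ^ 2 + t ^ 2 by nlinarith)
    unfold pseudoHuber
    linarith

-- After squaring, the claim reduces to `hST`, strict Cauchy–Schwarz for `(μ, s)` and `(μ, t)`:
-- the squares of its two sides differ by `μ² (s − t)²`.
theorem strictConvexOn_pseudoHuber {μ : ℝ} (hμ : μ ≠ 0) :
    StrictConvexOn ℝ univ (pseudoHuber μ) := by
  refine ⟨convex_univ, fun s _ t _ hst a b ha hb hab => ?_⟩
  set S := √(μ ^ 2 + s ^ 2)
  set T := √(μ ^ 2 + t ^ 2)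
  have hS : S ^ 2 = μ ^ 2 + s ^ 2 := Real.sq_sqrt (by positivity)
  have hT : T ^ 2 = μ ^ 2 + t ^ 2 := Real.sq_sqrt (by positivity)
  have hST : μ ^ 2 + s * t < S * T := by
    refine lt_of_pow_lt_pow_left₀ 2 (by positivity) ?_
    have hgap : 0 < μ ^ 2 * (s - t) ^ 2 := by
      have := sub_ne_zero.2 hst
      positivity
    nlinarith
  have hlt : √(μ ^ 2 + (a * s + b * t) ^ 2) < a * S + b * T := by
    rw [Real.sqrt_lt' (by positivity)]
    obtain rfl : b = 1 - a := by linarith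
    nlinarith [mul_pos ha hb]
  have hμab : a * μ + b * μ = μ := by rw [← add_mul, hab, one_mul]
  simp only [pseudoHuber, smul_eq_mul]
  linarith

section CoordinateSum

variable {ι E : Type*} [Fintype ι] {h : ι → E → ℝ}

theorem strictConvexOn_univ_sum_apply [AddCommGroup E] [Module ℝ E]
    (hh : ∀ i, StrictConvexOn ℝ univ (h i)) :
    StrictConvexOn ℝ univ fun u : ι → E => ∑ i, h i (u i) := by
  refine ⟨convex_univ, fun u _ v _ huv a b ha hb hab => ?_⟩
  obtain ⟨i₀, hi₀⟩ := Function.ne_iff.1 huv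
  simp only [Pi.add_apply, Pi.smul_apply, smul_eq_mul, Finset.mul_sum, ← Finset.sum_add_distrib]
  refine Finset.sum_lt_sum (fun i _ => ?_) ⟨i₀, Finset.mem_univ _, ?_⟩
  · simpa using (hh i).convexOn.2 (mem_univ (u i)) (mem_univ (v i)) ha.le hb.le hab
  · simpa using (hh i₀).2 (mem_univ _) (mem_univ _) hi₀ ha hb hab

theorem tendsto_sum_apply_cocompact [TopologicalSpace E]
    (hh : ∀ i, Tendsto (h i) (cocompact E) atTop) (h_nonneg : ∀ i x, 0 ≤ h i x) :
    Tendsto (fun u : ι → E => ∑ i, h i (u i)) (cocompact (ι → E)) atTop := by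
  rw [← coprodᵢ_cocompact, Filter.coprodᵢ, tendsto_iSup]
  exact fun i => tendsto_atTop_mono
    (fun u => Finset.single_le_sum (fun j _ => h_nonneg j (u j)) (Finset.mem_univ i))
    ((hh i).comp tendsto_comap)

end CoordinateSum

section JointlyInjective

variable {E F G : Type*} {φ : F → ℝ} {ψ : G → ℝ}

theorem strictConvexOn_univ_add_comp_linearMap [AddCommGroup E] [Module ℝ E]
    [AddCommGroup F] [Module ℝ F] [AddCommGroup G] [Module ℝ G]
    (hφ : StrictConvexOn ℝ univ φ) (hψ : StrictConvexOn ℝ univ ψ) {L : E →ₗ[ℝ] F}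
    {M : E →ₗ[ℝ] G} (hLM : ∀ x, L x = 0 → M x = 0 → x = 0) :
    StrictConvexOn ℝ univ fun x => φ (L x) + ψ (M x) := by
  refine ⟨convex_univ, fun x _ y _ hxy a b ha hb hab => ?_⟩
  have hφle := hφ.convexOn.2 (mem_univ (L x)) (mem_univ (L y)) ha.le hb.le hab
  have hψle := hψ.convexOn.2 (mem_univ (M x)) (mem_univ (M y)) ha.le hb.le hab
  have hsep : L x ≠ L y ∨ M x ≠ M y := by
    by_contra! h
    exact hxy (sub_eq_zero.1 (hLM _ (by simp [h.1]) (by simp [h.2])))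
  simp only [map_add, map_smul, smul_eq_mul] at hφle hψle ⊢
  rcases hsep with hL | hM
  · have := hφ.2 (mem_univ _) (mem_univ _) hL ha hb hab
    simp only [smul_eq_mul] at this
    linarith
  · have := hψ.2 (mem_univ _) (mem_univ _) hM ha hb hab
    simp only [smul_eq_mul] at this
    linarith

theorem tendsto_add_comp_linearMap_cocompact [NormedAddCommGroup E] [NormedSpace ℝ E]
    [FiniteDimensional ℝ E] [NormedAddCommGroup F] [NormedSpace ℝ F]
    [NormedAddCommGroup G] [NormedSpace ℝ G]
    (hφ : Tendsto φ (cocompact F) atTop) (hψ : Tendsto ψ (cocompact G) atTop)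
    (hφ_nonneg : ∀ u, 0 ≤ φ u) (hψ_nonneg : ∀ v, 0 ≤ ψ v) {L : E →ₗ[ℝ] F}
    {M : E →ₗ[ℝ] G} (hLM : ∀ x, L x = 0 → M x = 0 → x = 0) :
    Tendsto (fun x => φ (L x) + ψ (M x)) (cocompact E) atTop := by
  have hemb : Topology.IsClosedEmbedding (L.prod M) :=
    LinearMap.isClosedEmbedding_of_injective <| LinearMap.ker_eq_bot'.2 fun x hx =>
      hLM x (congrArg Prod.fst hx) (congrArg Prod.snd hx)
  refine Tendsto.comp (g := fun p : F × G => φ p.1 + ψ p.2) ?_ hemb.tendsto_cocompact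
  rw [← coprod_cocompact, Filter.coprod, tendsto_sup]
  exact ⟨tendsto_atTop_add_right_of_le _ 0 (hφ.comp tendsto_comap) fun p => hψ_nonneg p.2,
    tendsto_atTop_add_left_of_le _ 0 (fun p => hφ_nonneg p.1) (hψ.comp tendsto_comap)⟩

end JointlyInjective

theorem StrictConvexOn.existsUnique_forall_le {E : Type*} [NormedAddCommGroup E]
    [NormedSpace ℝ E] [FiniteDimensional ℝ E] {f : E → ℝ} (hf : StrictConvexOn ℝ univ f)
    (hf_coercive : Tendsto f (cocompact E) atTop) : ∃! x, ∀ z, f x ≤ f z := by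
  have hcont : Continuous f := continuousOn_univ.1 (hf.convexOn.continuousOn isOpen_univ)
  obtain ⟨x, hx⟩ := hcont.exists_forall_le hf_coercive
  exact ⟨x, hx, fun y hy => hf.eq_of_isMinOn (fun z _ => hy z) (fun z _ => hx z)
    (mem_univ y) (mem_univ x)⟩

/-- The smoothed compressed-sensing objective
`f(x) = c Σᵢ (√(μ² + (wᵢᵀ x)²) − μ) + (1/2)‖Ax − b‖²` with `c > 0`, `μ > 0` and
`Ker(Wᵀ) ∩ Ker(A) = {0}` is strictly convex and has a unique global minimizer. -/
theorem smoothed_objective_strictly_convex_unique_min {m n l : ℕ}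
    (A : Matrix (Fin m) (Fin n) ℝ) (W : Matrix (Fin n) (Fin l) ℝ)
    (b : Fin m → ℝ) (c μ : ℝ) (hc : 0 < c) (hμ : 0 < μ)
    (hker : ∀ x : Fin n → ℝ, Wᵀ *ᵥ x = 0 → A *ᵥ x = 0 → x = 0) :
    StrictConvexOn ℝ Set.univ
      (fun x : Fin n → ℝ =>
        c * ∑ i : Fin l, (Real.sqrt (μ ^ 2 + ((Wᵀ *ᵥ x) i) ^ 2) - μ) +
        (1 / 2) * ((A *ᵥ x - b) ⬝ᵥ (A *ᵥ x - b))) ∧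
    ∃! x : Fin n → ℝ,
      ∀ z : Fin n → ℝ,
        c * ∑ i : Fin l, (Real.sqrt (μ ^ 2 + ((Wᵀ *ᵥ x) i) ^ 2) - μ) +
          (1 / 2) * ((A *ᵥ x - b) ⬝ᵥ (A *ᵥ x - b)) ≤
        c * ∑ i : Fin l, (Real.sqrt (μ ^ 2 + ((Wᵀ *ᵥ z) i) ^ 2) - μ) +
          (1 / 2) * ((A *ᵥ z - b) ⬝ᵥ (A *ᵥ z - b)) := by
  have hφ : StrictConvexOn ℝ univ fun u : Fin l → ℝ => c * ∑ i, pseudoHuber μ (u i) :=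
    (strictConvexOn_univ_sum_apply fun _ => strictConvexOn_pseudoHuber hμ.ne').const_mul hc
  have hψ : StrictConvexOn ℝ univ fun v : Fin m → ℝ => 1 / 2 * ((v - b) ⬝ᵥ (v - b)) :=
    (strictConvexOn_univ_sum_apply fun j => strictConvexOn_univ_sub_mul_self (b j)).const_mul
      one_half_pos
  have hφ_coercive : Tendsto (fun u : Fin l → ℝ => c * ∑ i, pseudoHuber μ (u i))
      (cocompact _) atTop :=
    (tendsto_sum_apply_cocompact (fun _ => tendsto_pseudoHuber_cocompact μ)
      fun _ => pseudoHuber_nonneg μ).const_mul_atTop hc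
  have hψ_coercive : Tendsto (fun v : Fin m → ℝ => 1 / 2 * ((v - b) ⬝ᵥ (v - b)))
      (cocompact _) atTop :=
    (tendsto_sum_apply_cocompact (fun j => tendsto_sub_mul_self_cocompact (b j))
      fun _ _ => mul_self_nonneg _).const_mul_atTop one_half_pos
  have hφ_nonneg (u : Fin l → ℝ) : 0 ≤ c * ∑ i, pseudoHuber μ (u i) :=
    mul_nonneg hc.le (Finset.sum_nonneg fun i _ => pseudoHuber_nonneg μ (u i))
  have hψ_nonneg (v : Fin m → ℝ) : 0 ≤ 1 / 2 * ((v - b) ⬝ᵥ (v - b)) :=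
    mul_nonneg one_half_pos.le (Finset.sum_nonneg fun j _ => mul_self_nonneg _)
  have hLM : ∀ x, Wᵀ.mulVecLin x = 0 → A.mulVecLin x = 0 → x = 0 := hker
  have hf := strictConvexOn_univ_add_comp_linearMap hφ hψ hLM
  exact ⟨hf, hf.existsUnique_forall_le <| tendsto_add_comp_linearMap_cocompact
    hφ_coercive hψ_coercive hφ_nonneg hψ_nonneg hLM⟩
end
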